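/- arXiv:1904.03862 — 3 statements merged into one kernel-verified Lean document; each statement's English description precedes it below -/
import Mathlib

section
/- The map χ is equivariant: let G and H be groups, Ω a set with commuting left G- and H-actions (equivalently a left (G×H)-action), b : Ω → G a G-equivariant map (b(g·t) = g·b(t) for all g ∈ G, t ∈ Ω), and E a set with a left (G×H)-action. Endow functions ξ : G^{n+1} → (Ω → E) with the (G×H)-action ((g,h)·ξ)(g_0,…,g_n)(t) = (g,h)·[ξ(g^{-1}g_0,…,g^{-1}g_n)((g,h)^{-1}·t)], and functions ζ : H^{n+1} → (Ω → E) with the analogous action ((g,h)·ζ)(h_0,…,h_n)(t) = (g,h)·[ζ(h^{-1}h_0,…,h^{-1}h_n)((g,h)^{-1}·t)]. Define χ^n(ξ)(h_0,…,h_n)(t) = ξ(b(h_0^{-1}·t),…,b(h_n^{-1}·t))(t). Then χ^n((g,h)·ξ) = (g,h)·χ^n(ξ) for all (g,h) ∈ G×H and all ξ. -/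
/-- The `(G × H)`-action on `G`-cochains with values in `Ω → E`:
`((g,h)·ξ)(g₀,…,g_n)(t) = (g,h)·[ξ(g⁻¹g₀,…,g⁻¹g_n)((g,h)⁻¹·t)]`. -/
def actGCochain {G H Ω E : Type*} [Group G] [Group H] [MulAction (G × H) Ω]
    [MulAction (G × H) E] {n : ℕ} (p : G × H)
    (ξ : (Fin (n + 1) → G) → Ω → E) : (Fin (n + 1) → G) → Ω → E :=
  fun gs t => p • ξ (fun i => p.1⁻¹ * gs i) (p⁻¹ • t)

/-- The `(G × H)`-action on `H`-cochains with values in `Ω → E`: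
`((g,h)·ζ)(h₀,…,h_n)(t) = (g,h)·[ζ(h⁻¹h₀,…,h⁻¹h_n)((g,h)⁻¹·t)]`. -/
def actHCochain {G H Ω E : Type*} [Group G] [Group H] [MulAction (G × H) Ω]
    [MulAction (G × H) E] {n : ℕ} (p : G × H)
    (ζ : (Fin (n + 1) → H) → Ω → E) : (Fin (n + 1) → H) → Ω → E :=
  fun hs t => p • ζ (fun i => p.2⁻¹ * hs i) (p⁻¹ • t)

/-- The map `χⁿ`, `χⁿ(ξ)(h₀,…,h_n)(t) = ξ(b(h₀⁻¹·t),…,b(h_n⁻¹·t))(t)`, where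
`h⁻¹·t` denotes the action of `(1, h⁻¹) ∈ G × H` on `t ∈ Ω`. -/
def chiMap {G H Ω E : Type*} [Group G] [Group H] [MulAction (G × H) Ω]
    (b : Ω → G) {n : ℕ}
    (ξ : (Fin (n + 1) → G) → Ω → E) : (Fin (n + 1) → H) → Ω → E :=
  fun hs t => ξ (fun i => b ((((1 : G), (hs i)⁻¹) : G × H) • t)) t

/-- If `b : Ω → G` is `G`-equivariant, then `χ` is `(G × H)`-equivariant. -/
theorem chi_equivariant (G H Ω E : Type*) [Group G] [Group H]
    [MulAction (G × H) Ω] [MulAction (G × H) E] (b : Ω → G)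
    (hb : ∀ (g : G) (t : Ω), b (((g, (1 : H)) : G × H) • t) = g * b t)
    (n : ℕ) (p : G × H) (ξ : (Fin (n + 1) → G) → Ω → E) :
    chiMap b (actGCochain p ξ) = actHCochain p (chiMap b ξ) := by
  funext hs t
  simp only [chiMap, actGCochain, actHCochain]
  have : (fun i => p.1⁻¹ * b ((((1 : G), (hs i)⁻¹) : G × H) • t)) =
      (fun i => b ((((1 : G), (p.2⁻¹ * hs i)⁻¹) : G × H) • p⁻¹ • t)) := by
    funext i
    rw [← hb, smul_smul, smul_smul]
    congr 2
    simp [Prod.ext_iff]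
  rw [this]
end

section
/- Equivariance of the map α from the relative injectivity lemma: let G and H be groups, X a set with a left G-action, and ω : G × X → H a cocycle, i.e. ω(g_1 g_2, x) = ω(g_1, g_2·x)·ω(g_2, x) for all g_1, g_2 ∈ G and x ∈ X. Let E be a set with a left (G×H)-action. For n ≥ 1, endow functions ξ : G^{n+1} → (H × X → E) with the action ((g,h)·ξ)(g_0,…,g_n)(h′,x) = (g,h)·[ξ(g^{-1}g_0,…,g^{-1}g_n)(h^{-1}h′·ω(g^{-1},x)^{-1}, g^{-1}·x)], and functions η : G × H → (G^n × X → E) with the action ((g,h)·η)(g′,h′)(g_1,…,g_n,x) = (g,h)·[η(g^{-1}g′, h^{-1}h′)(g^{-1}g_1,…,g^{-1}g_n, g^{-1}·x)]. Define α(ξ)(g,h)(g_1,…,g_n,x) = ξ(g_1,…,g_n,g)(h·ω(g^{-1},x), x). Then α is a bijection between these function spaces and α((ḡ,h̄)·ξ) = (ḡ,h̄)·α(ξ) for all (ḡ,h̄) ∈ G×H and all ξ. -/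
/-- The map `α`, `α(ξ)(g,h)(g₁,…,g_n,x) = ξ(g₁,…,g_n,g)(h·ω(g⁻¹,x), x)`. -/
def alphaMap {G H X E : Type*} [Group G] [Group H] [MulAction G X]
    (ω : G → X → H) {n : ℕ}
    (ξ : (Fin (n + 1) → G) → H × X → E) : G × H → (Fin n → G) × X → E :=
  fun p q => ξ (Fin.snoc q.1 p.1) (p.2 * ω p.1⁻¹ q.2, q.2)

/-- The `(G × H)`-action on functions `ξ : G^{n+1} → (H × X → E)`:
`((g,h)·ξ)(g₀,…,g_n)(h′,x) = (g,h)·[ξ(g⁻¹g₀,…,g⁻¹g_n)(h⁻¹h′·ω(g⁻¹,x)⁻¹, g⁻¹·x)]`. -/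
def actA {G H X E : Type*} [Group G] [Group H] [MulAction G X]
    [MulAction (G × H) E] (ω : G → X → H) {n : ℕ} (p : G × H)
    (ξ : (Fin (n + 1) → G) → H × X → E) : (Fin (n + 1) → G) → H × X → E :=
  fun gs q =>
    p • ξ (fun i => p.1⁻¹ * gs i) (p.2⁻¹ * q.1 * (ω p.1⁻¹ q.2)⁻¹, p.1⁻¹ • q.2)

/-- The `(G × H)`-action on functions `η : G × H → (Gⁿ × X → E)`:
`((g,h)·η)(g′,h′)(g₁,…,g_n,x) = (g,h)·[η(g⁻¹g′, h⁻¹h′)(g⁻¹g₁,…,g⁻¹g_n, g⁻¹·x)]`. -/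
def actB {G H X E : Type*} [Group G] [Group H] [MulAction G X]
    [MulAction (G × H) E] {n : ℕ} (p : G × H)
    (η : G × H → (Fin n → G) × X → E) : G × H → (Fin n → G) × X → E :=
  fun q r => p • η (p.1⁻¹ * q.1, p.2⁻¹ * q.2) (fun i => p.1⁻¹ * r.1 i, p.1⁻¹ • r.2)

section

variable {G H X E : Type*} [Group G] [Group H] [MulAction G X] (ω : G → X → H) {n : ℕ}

theorem cocycle_mul_inv_eq
    (hω : ∀ (g₁ g₂ : G) (x : X), ω (g₁ * g₂) x = ω g₁ (g₂ • x) * ω g₂ x)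
    (g k : G) (x : X) : ω g x * (ω k x)⁻¹ = ω (g * k⁻¹) (k • x) := by
  refine mul_inv_eq_of_eq_mul ?_
  simpa using hω (g * k⁻¹) k x

def alphaEquiv :
    ((Fin (n + 1) → G) → H × X → E) ≃ (G × H → (Fin n → G) × X → E) where
  toFun := alphaMap ω
  invFun η gs q := η (gs (Fin.last n), q.1 * (ω (gs (Fin.last n))⁻¹ q.2)⁻¹) (Fin.init gs, q.2)
  left_inv ξ := by
    funext gs q
    simp [alphaMap, Fin.snoc_init_self]
  right_inv η := by
    funext p q
    simp [alphaMap, Fin.init_snoc]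

theorem alphaMap_actA [MulAction (G × H) E]
    (hω : ∀ (g₁ g₂ : G) (x : X), ω (g₁ * g₂) x = ω g₁ (g₂ • x) * ω g₂ x)
    (p : G × H) (ξ : (Fin (n + 1) → G) → H × X → E) :
    alphaMap ω (actA ω p ξ) = actB p (alphaMap ω ξ) := by
  funext q r
  have hsnoc : (fun i => p.1⁻¹ * (Fin.snoc r.1 q.1 : Fin (n + 1) → G) i) =
      Fin.snoc (p.1⁻¹ * r.1 ·) (p.1⁻¹ * q.1) :=
    Fin.comp_snoc (p.1⁻¹ * ·) r.1 q.1
  -- `ω(q⁻¹, x) ω(p⁻¹, x)⁻¹ = ω(q⁻¹p, p⁻¹x)` absorbs the twist by `ω(p⁻¹, x)⁻¹` in `actA`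
  have hω' := cocycle_mul_inv_eq ω hω q.1⁻¹ p.1⁻¹ r.2
  simp only [alphaMap, actA, actB, hsnoc, mul_inv_rev, inv_inv, mul_assoc, hω']

end

theorem alphaMap_bijective_equivariant_general (G H X E : Type*) [Group G] [Group H]
    [MulAction G X] [MulAction (G × H) E] (ω : G → X → H)
    (hω : ∀ (g₁ g₂ : G) (x : X), ω (g₁ * g₂) x = ω g₁ (g₂ • x) * ω g₂ x)
    (n : ℕ) :
    Function.Bijective
        (alphaMap (E := E) ω : ((Fin (n + 1) → G) → H × X → E) → _) ∧
      ∀ (p : G × H) (ξ : (Fin (n + 1) → G) → H × X → E),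
        alphaMap ω (actA ω p ξ) = actB p (alphaMap ω ξ) :=
  ⟨(alphaEquiv ω).bijective, alphaMap_actA ω hω⟩

/-- `α` is a bijection between the two function spaces and is
`(G × H)`-equivariant, provided `ω` satisfies the cocycle identity. -/
theorem alphaMap_bijective_equivariant (G H X E : Type*) [Group G] [Group H]
    [MulAction G X] [MulAction (G × H) E] (ω : G → X → H)
    (hω : ∀ (g₁ g₂ : G) (x : X), ω (g₁ * g₂) x = ω g₁ (g₂ • x) * ω g₂ x)
    (n : ℕ) (hn : 1 ≤ n) :
    Function.Bijective
        (alphaMap (E := E) ω : ((Fin (n + 1) → G) → H × X → E) → _) ∧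
      ∀ (p : G × H) (ξ : (Fin (n + 1) → G) → H × X → E),
        alphaMap ω (actA ω p ξ) = actB p (alphaMap ω ξ) :=
  alphaMap_bijective_equivariant_general G H X E ω hω n
end

section
/- Differentiable trivialisations make the infinitesimal of a deformation a Hochschild coboundary: let A be a finite-dimensional real associative algebra with product (a,b) ↦ a·b, and let f_i : A × A → A (i ≥ 0) be bilinear maps with f_0(a,b) = a·b. Let U ⊆ ℝ be a neighbourhood of 0 and suppose that for each λ ∈ U there is a bilinear product ∗_λ on A such that for all a, b ∈ A the series Σ_{i=0}^∞ f_i(a,b) λ^i converges to a ∗_λ b. Suppose φ_λ : A → A (λ ∈ U) are linear bijections such that φ_λ(a ∗_λ b) = φ_λ(a)·φ_λ(b) for all a, b ∈ A (so φ_λ is an algebra isomorphism from (A, ∗_λ) to (A, ·)), φ_0 is the identity, and for each a ∈ A the map λ ↦ φ_λ(a) is differentiable at λ = 0; let g(a) denote its derivative at 0. Then f_1(a,b) = a·g(b) − g(a·b) + g(a)·b for all a, b ∈ A; that is, f_1 is the Hochschild coboundary ∂_1 g. -/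
/-!
The series `∑ λⁱ • fᵢ(a, b)` converges at some `λ ≠ 0`, so its terms are bounded there and it
defines an analytic function of `λ` near `0`; hence `λ ↦ a ∗_λ b` has value `a·b` and derivative
`f₁(a, b)` at `0`. Differentiating `φ_λ(a ∗_λ b) = φ_λ(a)·φ_λ(b)` at `λ = 0` by the product rule
gives `g(a·b) + f₁(a, b) = g(a)·b + a·g(b)`.
-/

open Filter Topology
open scoped ENNReal

theorem tendsto_atTop_zero_of_tendsto_sum_range {G : Type*} [AddCommGroup G] [TopologicalSpace G]
    [IsTopologicalAddGroup G] {u : ℕ → G} {S : G}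
    (h : Tendsto (fun N => ∑ i ∈ Finset.range N, u i) atTop (𝓝 S)) :
    Tendsto u atTop (𝓝 0) := by
  simpa [Function.comp_def, Finset.sum_range_succ] using
    (h.comp (tendsto_add_atTop_nat 1)).sub h

namespace FormalMultilinearSeries

variable {𝕜 E : Type*} [NontriviallyNormedField 𝕜] [NormedAddCommGroup E] [NormedSpace 𝕜 E]

def ofCoeffs (v : ℕ → E) : FormalMultilinearSeries 𝕜 𝕜 E :=
  fun n => ContinuousMultilinearMap.mkPiRing 𝕜 (Fin n) (v n)

@[simp]
theorem coeff_ofCoeffs (v : ℕ → E) (n : ℕ) :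
    (ofCoeffs v : FormalMultilinearSeries 𝕜 𝕜 E).coeff n = v n := by
  simp [coeff, ofCoeffs]

theorem le_radius_ofCoeffs_of_tendsto {v : ℕ → E} {z : 𝕜} {S : E}
    (h : Tendsto (fun N => ∑ i ∈ Finset.range N, z ^ i • v i) atTop (𝓝 S)) :
    (‖z‖₊ : ℝ≥0∞) ≤ (ofCoeffs v : FormalMultilinearSeries 𝕜 𝕜 E).radius := by
  refine le_radius_of_tendsto _ (l := 0) ?_
  simpa [norm_smul, mul_comm] using (tendsto_atTop_zero_of_tendsto_sum_range h).norm

theorem hasFPowerSeriesAt_ofCoeffs [CompleteSpace E] {v : ℕ → E} {s : 𝕜 → E}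
    (hs : ∀ᶠ z in 𝓝 0, Tendsto (fun N => ∑ i ∈ Finset.range N, z ^ i • v i) atTop (𝓝 (s z))) :
    HasFPowerSeriesAt s (ofCoeffs v) 0 := by
  obtain ⟨ε, hε, hball⟩ := Metric.eventually_nhds_iff.mp hs
  obtain ⟨z, hz0, hzε⟩ := NormedField.exists_norm_lt 𝕜 hε
  let p : FormalMultilinearSeries 𝕜 𝕜 E := ofCoeffs v
  have hradius : 0 < p.radius :=
    lt_of_lt_of_le (by simpa using hz0)
      (le_radius_ofCoeffs_of_tendsto (hball (by simpa using hzε)))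
  have hsum := (p.hasFPowerSeriesOnBall hradius).hasFPowerSeriesAt
  refine hsum.congr ?_
  filter_upwards [hs, hsum.eventually_hasSum] with y hy hsum_y
  rw [zero_add] at hsum_y
  exact tendsto_nhds_unique (by simpa [p] using hsum_y.tendsto_sum_nat) hy

end FormalMultilinearSeries

section PointwiseDerivative

variable {𝕜 E F : Type*} [NontriviallyNormedField 𝕜] [NormedAddCommGroup E] [NormedSpace 𝕜 E]
  [NormedAddCommGroup F] [NormedSpace 𝕜 F] {t : 𝕜}

theorem isLinearMap_of_hasDerivAt_apply {φ : 𝕜 → E →ₗ[𝕜] F} {g : E → F}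
    (hφ : ∀ x, HasDerivAt (fun r => φ r x) (g x) t) : IsLinearMap 𝕜 g where
  map_add x y := (hφ (x + y)).unique <| by simpa using (hφ x).fun_add (hφ y)
  map_smul c x := (hφ (c • x)).unique <| by simpa using (hφ x).fun_const_smul c

variable [CompleteSpace 𝕜] [FiniteDimensional 𝕜 E]

theorem HasDerivAt.linearMap_comp (L : E →ₗ[𝕜] F) {s : 𝕜 → E} {s' : E}
    (hs : HasDerivAt s s' t) : HasDerivAt (fun r => L (s r)) (L s') t :=
  (LinearMap.toContinuousLinearMap L).hasFDerivAt.comp_hasDerivAt t hs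

theorem HasDerivAt.linearMap_apply_of_hasDerivAt_apply {φ : 𝕜 → E →ₗ[𝕜] F} {g : E → F}
    {s : 𝕜 → E} {s' : E} (hφ : ∀ x, HasDerivAt (fun r => φ r x) (g x) t)
    (hs : HasDerivAt s s' t) :
    HasDerivAt (fun r => φ r (s r)) (g (s t) + φ t s') t := by
  -- Only the values of `φ r` on a basis need to be differentiated, one scalar coordinate at a time.
  let b := Module.finBasis 𝕜 E
  have hexpand (L : E →ₗ[𝕜] F) (x : E) : ∑ i, b.repr x i • L (b i) = L x := by
    conv_rhs => rw [← b.sum_repr x, map_sum]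
    simp only [map_smul]
  have hsum := HasDerivAt.fun_sum (u := Finset.univ) fun i _ =>
    (hs.linearMap_comp (b.coord i)).smul (hφ (b i))
  simp only [Module.Basis.coord_apply, Finset.sum_add_distrib] at hsum
  convert hsum using 1
  · exact funext fun r => (hexpand (φ r) (s r)).symm
  · have hg := hexpand ((isLinearMap_of_hasDerivAt_apply hφ).mk' g) (s t)
    simp only [IsLinearMap.mk'_apply] at hg
    rw [hexpand (φ t), hg]

end PointwiseDerivative

theorem deformation_infinitesimal_is_coboundary_general
    (A : Type*) [NormedAddCommGroup A] [NormedSpace ℝ A] [FiniteDimensional ℝ A]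
    (mul : A →ₗ[ℝ] A →ₗ[ℝ] A)
    (f : ℕ → A →ₗ[ℝ] A →ₗ[ℝ] A) (hf0 : f 0 = mul)
    (U : Set ℝ) (hU : U ∈ nhds (0 : ℝ))
    (st : ℝ → A → A → A)
    (hconv : ∀ lam ∈ U, ∀ a b : A,
      Filter.Tendsto (fun N => ∑ i ∈ Finset.range N, lam ^ i • f i a b)
        Filter.atTop (nhds (st lam a b)))
    (φ : ℝ → A →ₗ[ℝ] A)
    (hhom : ∀ lam ∈ U, ∀ a b : A, φ lam (st lam a b) = mul (φ lam a) (φ lam b))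
    (hφ0 : φ 0 = LinearMap.id)
    (g : A → A)
    (hg : ∀ a : A, HasDerivAt (fun lam => φ lam a) (g a) 0) :
    ∀ a b : A, f 1 a b = mul a (g b) - g (mul a b) + mul (g a) b := by
  intro a b
  have hseries : HasFPowerSeriesAt (fun lam => st lam a b) (.ofCoeffs fun i => f i a b) 0 :=
    FormalMultilinearSeries.hasFPowerSeriesAt_ofCoeffs <| by
      filter_upwards [hU] with lam hlam using hconv lam hlam a b
  have hst0 : st 0 a b = mul a b := by
    simpa [hf0] using (hseries.coeff_zero Fin.elim0).symm
  have hlhs : HasDerivAt (fun lam => φ lam (st lam a b)) (g (mul a b) + f 1 a b) 0 := by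
    simpa [hst0, hφ0] using hseries.hasDerivAt.linearMap_apply_of_hasDerivAt_apply hg
  have hrhs : HasDerivAt (fun lam => mul (φ lam a) (φ lam b)) (mul (g a) b + mul a (g b)) 0 := by
    simpa [hφ0] using (hg b).linearMap_apply_of_hasDerivAt_apply (φ := fun lam => mul (φ lam a))
      fun x => (hg a).linearMap_comp (mul.flip x)
  have hderiv := hlhs.unique <| hrhs.congr_of_eventuallyEq <| by
    filter_upwards [hU] with lam hlam using hhom lam hlam a b
  rw [← sub_eq_zero] at hderiv ⊢
  rw [← hderiv]
  abel

/-- Differentiable trivialisations make the infinitesimal of a one-parameter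
deformation of a finite-dimensional real associative algebra a Hochschild
coboundary.  The algebra is `A` with associative bilinear product `mul`; the
deformation is the family of bilinear maps `f i` with `f 0 = mul`, whose power
series in `lam` converges on a neighbourhood `U` of `0` to the product
`st lam`; `φ lam` is a linear bijection which is an algebra isomorphism from
`(A, st lam)` to `(A, mul)`, with `φ 0 = id` and `lam ↦ φ lam a` differentiable
at `0` with derivative `g a`.  Then `f 1 = ∂₁ g`. -/
theorem deformation_infinitesimal_is_coboundary
    (A : Type*) [NormedAddCommGroup A] [NormedSpace ℝ A] [FiniteDimensional ℝ A]
    (mul : A →ₗ[ℝ] A →ₗ[ℝ] A)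
    (hassoc : ∀ a b c : A, mul (mul a b) c = mul a (mul b c))
    (f : ℕ → A →ₗ[ℝ] A →ₗ[ℝ] A) (hf0 : f 0 = mul)
    (U : Set ℝ) (hU : U ∈ nhds (0 : ℝ))
    (st : ℝ → A → A → A)
    (hconv : ∀ lam ∈ U, ∀ a b : A,
      Filter.Tendsto (fun N => ∑ i ∈ Finset.range N, lam ^ i • f i a b)
        Filter.atTop (nhds (st lam a b)))
    (φ : ℝ → A →ₗ[ℝ] A)
    (hbij : ∀ lam ∈ U, Function.Bijective (φ lam))
    (hhom : ∀ lam ∈ U, ∀ a b : A, φ lam (st lam a b) = mul (φ lam a) (φ lam b))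
    (hφ0 : φ 0 = LinearMap.id)
    (g : A → A)
    (hg : ∀ a : A, HasDerivAt (fun lam => φ lam a) (g a) 0) :
    ∀ a b : A, f 1 a b = mul a (g b) - g (mul a b) + mul (g a) b :=
  deformation_infinitesimal_is_coboundary_general A mul f hf0 U hU st hconv φ hhom hφ0 g hg
end
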